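/- arXiv:2508.20305 — 2 statements merged into one kernel-verified Lean document; each statement's English description precedes it below -/
import Mathlib

section
/- Let G = (V, E, w) be a finite directed graph with positive integer vertex weights and let G' be its reduction graph. Let s, t ∈ V with s ≠ t and (s, t) ∉ E. For every undirected vertex cut (L', S', R') of G' with s_out ∈ L' and t_in ∈ R', there exists a directed vertex cut (L, S, R) of G with s ∈ L, t ∈ R, and w(S) + w(V) ≤ w'(S'). -/
open scoped Classical

/-- `v_out`: the out-copy of a vertex `v`. -/
abbrev vOut {V : Type*} (v : V) : V ⊕ V := Sum.inl v

/-- `v_in`: the in-copy of a vertex `v`. -/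
abbrev vIn {V : Type*} (v : V) : V ⊕ V := Sum.inr v

/-- `V_out`: the set of out-copies of vertices. -/
def VOut (V : Type*) : Set (V ⊕ V) := Set.range Sum.inl

/-- `V_in`: the set of in-copies of vertices. -/
def VIn (V : Type*) : Set (V ⊕ V) := Set.range Sum.inr

/-- Adjacency relation of the reduction graph `G'` built from the directed edge set `E`:
a clique on `V_out`, a clique on `V_in`, the perfect matching `{v_out, v_in}`,
and an edge `{u_out, v_in}` for every directed edge `(u, v) ∈ E`. -/
def adj' {V : Type*} (E : Set (V × V)) : V ⊕ V → V ⊕ V → Prop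
  | Sum.inl u, Sum.inl v => u ≠ v
  | Sum.inr u, Sum.inr v => u ≠ v
  | Sum.inl u, Sum.inr v => u = v ∨ (u, v) ∈ E
  | Sum.inr u, Sum.inl v => v = u ∨ (v, u) ∈ E

/-- An undirected vertex cut `(L', S', R')` of the reduction graph `G'`:
pairwise disjoint sets covering all vertices, `L'` and `R'` nonempty, and no
edge of `G'` with one endpoint in `L'` and the other in `R'`. -/
structure IsUndirCut {V : Type*} (E : Set (V × V)) (L S R : Set (V ⊕ V)) : Prop where
  disjLS : Disjoint L S
  disjLR : Disjoint L R
  disjSR : Disjoint S R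
  cover : L ∪ S ∪ R = Set.univ
  neL : L.Nonempty
  neR : R.Nonempty
  sep : ∀ x ∈ L, ∀ y ∈ R, ¬ adj' E x y

/-- A directed vertex cut `(L, S, R)` of the directed graph `G = (V, E)`:
pairwise disjoint sets covering all vertices, `L` and `R` nonempty, and no
directed edge from `L` to `R`. -/
structure IsDirCut {V : Type*} (E : Set (V × V)) (L S R : Set V) : Prop where
  disjLS : Disjoint L S
  disjLR : Disjoint L R
  disjSR : Disjoint S R
  cover : L ∪ S ∪ R = Set.univ
  neL : L.Nonempty
  neR : R.Nonempty
  sep : ∀ u ∈ L, ∀ v ∈ R, (u, v) ∉ E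

/-- Weight `w(X)` of a set of vertices of `G`. -/
noncomputable def wt {V : Type*} [Fintype V] (w : V → ℕ) (X : Set V) : ℕ :=
  ∑ v ∈ X.toFinite.toFinset, w v

/-- Weight `w'(X)` of a set of vertices of `G'`, where `w'(v_out) = w'(v_in) = w(v)`. -/
noncomputable def wt' {V : Type*} [Fintype V] (w : V → ℕ) (X : Set (V ⊕ V)) : ℕ :=
  ∑ x ∈ X.toFinite.toFinset, Sum.elim w w x

/-- Neighborhood `N_{G'}(X)`: the vertices outside `X` adjacent in `G'` to some vertex of `X`. -/
def nbr' {V : Type*} (E : Set (V × V)) (X : Set (V ⊕ V)) : Set (V ⊕ V) :=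
  {y | y ∉ X ∧ ∃ x ∈ X, adj' E x y}

/-- In-neighborhood `N^in_G(R)` of a vertex set `R` in the directed graph `G`. -/
def NIn {V : Type*} (E : Set (V × V)) (R : Set V) : Set V :=
  {u | u ∉ R ∧ ∃ v ∈ R, (u, v) ∈ E}

lemma wt_eq {V : Type*} [Fintype V] (w : V → ℕ) (X : Set V) :
    wt w X = ∑ v : V, if v ∈ X then w v else 0 := by
  classical
  rw [wt, ← Finset.sum_filter]
  congr 1
  ext v
  simp

lemma wt'_eq {V : Type*} [Fintype V] (w : V → ℕ) (X : Set (V ⊕ V)) :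
    wt' w X = (∑ v : V, if Sum.inl v ∈ X then w v else 0)
      + (∑ v : V, if Sum.inr v ∈ X then w v else 0) := by
  classical
  have h : wt' w X = ∑ x : V ⊕ V, if x ∈ X then Sum.elim w w x else 0 := by
    rw [wt', ← Finset.sum_filter]
    congr 1
    ext x
    simp
  rw [h, Fintype.sum_sum_type]
  simp


/-- for `s ≠ t` with `(s, t) ∉ E`, from every undirected vertex
cut `(L', S', R')` of `G'` with `s_out ∈ L'` and `t_in ∈ R'`, one obtains a
directed vertex cut `(L, S, R)` of `G` with `s ∈ L`, `t ∈ R`, and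
`w(S) + w(V) ≤ w'(S')`. -/
theorem dir_st_cut_from_undir_cut {V : Type*} [Fintype V] (E : Set (V × V))
    (hE : ∀ v : V, (v, v) ∉ E) (w : V → ℕ) (hw : ∀ v : V, 1 ≤ w v)
    (s t : V) (hst : s ≠ t) (hstE : (s, t) ∉ E)
    (L' S' R' : Set (V ⊕ V)) (hcut : IsUndirCut E L' S' R')
    (hs : vOut s ∈ L') (ht : vIn t ∈ R') :
    ∃ L S R : Set V, IsDirCut E L S R ∧ s ∈ L ∧ t ∈ R ∧
      wt w S + wt w Set.univ ≤ wt' w S' := by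
  classical
  set A : Set V := {v | Sum.inl v ∈ L'} with hA
  set B : Set V := {v | Sum.inr v ∈ R'} with hB
  -- no inr in L', no inl in R'
  have hRin : ∀ v : V, Sum.inl v ∉ R' := by
    intro v hv
    by_cases hvs : v = s
    · exact hcut.disjLR.ne_of_mem hs hv (by rw [hvs])
    · exact hcut.sep _ hs _ hv (fun h => hvs h.symm)
  have hLout : ∀ v : V, Sum.inr v ∉ L' := by
    intro v hv
    by_cases hvt : v = t
    · exact hcut.disjLR.ne_of_mem hv ht (by rw [hvt])
    · exact hcut.sep _ hv _ ht hvt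
  have hmemS' : ∀ x : V ⊕ V, x ∈ S' ↔ x ∉ L' ∧ x ∉ R' := by
    intro x
    constructor
    · intro hx
      exact ⟨fun h => hcut.disjLS.ne_of_mem h hx rfl,
        fun h => hcut.disjSR.ne_of_mem hx h rfl⟩
    · intro ⟨h1, h2⟩
      have := hcut.cover.symm ▸ Set.mem_univ x
      rcases this with (h | h) | h
      · exact absurd h h1
      · exact h
      · exact absurd h h2
  have hAB : ∀ v : V, ¬ (v ∈ A ∧ v ∈ B) := by
    intro v ⟨h1, h2⟩
    exact hcut.sep _ h1 _ h2 (Or.inl rfl)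
  refine ⟨A, (A ∪ B)ᶜ, B, ?_, hs, ht, ?_⟩
  · constructor
    · rw [Set.disjoint_left]; intro v h1 h2; exact h2 (Or.inl h1)
    · rw [Set.disjoint_left]; intro v h1 h2; exact hAB v ⟨h1, h2⟩
    · rw [Set.disjoint_left]; intro v h1 h2; exact h1 (Or.inr h2)
    · ext v; simp [or_comm, or_assoc]; tauto
    · exact ⟨s, hs⟩
    · exact ⟨t, ht⟩
    · intro u hu v hv huv
      exact hcut.sep _ hu _ hv (Or.inr huv)
  · rw [wt_eq, wt_eq, wt'_eq, ← Finset.sum_add_distrib, ← Finset.sum_add_distrib]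
    apply Finset.sum_le_sum
    intro v _
    have h1 : (Sum.inl v ∈ S') ↔ v ∉ A := by
      rw [hmemS']
      simp only [hA, Set.mem_setOf_eq]
      constructor
      · exact fun h => h.1
      · exact fun h => ⟨h, hRin v⟩
    have h2 : (Sum.inr v ∈ S') ↔ v ∉ B := by
      rw [hmemS']
      simp only [hB, Set.mem_setOf_eq]
      constructor
      · exact fun h => h.2
      · exact fun h => ⟨hLout v, h⟩
    by_cases hva : v ∈ A
    · by_cases hvb : v ∈ B
      · exact absurd ⟨hva, hvb⟩ (hAB v)
      · simp [h1, h2, hva, hvb]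
    · by_cases hvb : v ∈ B
      · simp [h1, h2, hva, hvb]
      · simp [h1, h2, hva, hvb]
end

section
/- Let G = (V, E, w) be a finite directed graph with positive integer vertex weights and let G' be its reduction graph. Let s, t ∈ V with s ≠ t and (s, t) ∉ E. Then κ_G(s, t) = κ_{G'}(s_out, t_in) − w(V), where κ_G(s, t) is the minimum weight w(S) over all directed vertex cuts (L, S, R) of G with s ∈ L and t ∈ R, and κ_{G'}(s_out, t_in) is the minimum weight w'(S') over all undirected vertex cuts (L', S', R') of G' with s_out ∈ L' and t_in ∈ R'. (In particular, both minima are over nonempty sets of cuts.) -/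
open scoped Classical

lemma wt_union {V : Type*} [Fintype V] (w : V → ℕ) {X Y : Set V} (h : Disjoint X Y) :
    wt w (X ∪ Y) = wt w X + wt w Y := by
  unfold wt
  rw [show (X ∪ Y).toFinite.toFinset = X.toFinite.toFinset ∪ Y.toFinite.toFinset by
    ext a; simp only [Set.Finite.mem_toFinset, Finset.mem_union, Set.mem_union]]
  rw [Finset.sum_union]
  rw [Finset.disjoint_left]
  intro a ha hb
  simp only [Set.Finite.mem_toFinset] at ha hb
  exact h.le_bot ⟨ha, hb⟩

lemma wt_image {V W : Type*} [Fintype V] [Fintype W] (w : W → ℕ) (f : V → W)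
    (hf : Function.Injective f) (X : Set V) :
    wt w (f '' X) = wt (w ∘ f) X := by
  unfold wt
  rw [show (f '' X).toFinite.toFinset = X.toFinite.toFinset.image f by
    ext a; simp only [Set.Finite.mem_toFinset, Finset.mem_image, Set.mem_image]]
  rw [Finset.sum_image (fun a _ b _ h => hf h)]
  rfl

lemma wt_partition {V : Type*} [Fintype V] (w : V → ℕ) {L S R : Set V}
    (hLS : Disjoint L S) (hLR : Disjoint L R) (hSR : Disjoint S R)
    (hcov : L ∪ S ∪ R = Set.univ) :
    wt w L + wt w S + wt w R = wt w Set.univ := by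
  rw [← hcov, wt_union w (Set.disjoint_union_left.2 ⟨hLR, hSR⟩), wt_union w hLS]

lemma wt'_eq_s9 {V : Type*} [Fintype V] (w : V → ℕ) (X : Set (V ⊕ V)) :
    wt' w X = wt (Sum.elim w w) X := rfl

lemma wt'_inl {V : Type*} [Fintype V] (w : V → ℕ) (X : Set V) :
    wt' w (Sum.inl '' X) = wt w X := by
  rw [wt'_eq_s9, wt_image _ _ Sum.inl_injective]; rfl

lemma wt'_inr {V : Type*} [Fintype V] (w : V → ℕ) (X : Set V) :
    wt' w (Sum.inr '' X) = wt w X := by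
  rw [wt'_eq_s9, wt_image _ _ Sum.inr_injective]; rfl

lemma disjoint_inl_inr {V : Type*} (X Y : Set V) :
    Disjoint (Sum.inl '' X : Set (V ⊕ V)) (Sum.inr '' Y) := by
  rw [Set.disjoint_left]
  rintro x ⟨a, _, rfl⟩ ⟨b, _, h⟩
  exact Sum.inl_ne_inr h.symm

lemma wt'_univ {V : Type*} [Fintype V] (w : V → ℕ) :
    wt' w Set.univ = wt w Set.univ + wt w Set.univ := by
  have h : (Set.univ : Set (V ⊕ V)) = Sum.inl '' Set.univ ∪ Sum.inr '' Set.univ := by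
    ext (x | x) <;> simp
  rw [h, wt'_eq_s9, wt_union _ (disjoint_inl_inr _ _), ← wt'_eq_s9, ← wt'_eq_s9, wt'_inl, wt'_inr]

lemma dir_to_undir {V : Type*} [Fintype V] {E : Set (V × V)} (w : V → ℕ)
    {L S R : Set V} {s t : V} (hcut : IsDirCut E L S R) (hs : s ∈ L) (ht : t ∈ R) :
    ∃ L' S' R' : Set (V ⊕ V), IsUndirCut E L' S' R' ∧ vOut s ∈ L' ∧ vIn t ∈ R' ∧
      wt' w S' = wt w S + wt w Set.univ := by
  refine ⟨Sum.inl '' L, Sum.inl '' (S ∪ R) ∪ Sum.inr '' (L ∪ S), Sum.inr '' R,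
    ⟨?_, ?_, ?_, ?_, ⟨_, s, hs, rfl⟩, ⟨_, t, ht, rfl⟩, ?_⟩, ⟨s, hs, rfl⟩, ⟨t, ht, rfl⟩, ?_⟩
  · refine Set.disjoint_union_right.2 ⟨?_, disjoint_inl_inr _ _⟩
    rw [Set.disjoint_left]
    rintro x ⟨a, ha, rfl⟩ ⟨b, hb, hba⟩
    obtain rfl : b = a := Sum.inl_injective hba
    rcases hb with hb | hb
    · exact hcut.disjLS.le_bot ⟨ha, hb⟩
    · exact hcut.disjLR.le_bot ⟨ha, hb⟩
  · exact disjoint_inl_inr _ _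
  · refine Set.disjoint_union_left.2 ⟨(disjoint_inl_inr _ _), ?_⟩
    rw [Set.disjoint_left]
    rintro x ⟨a, ha, rfl⟩ ⟨b, hb, hba⟩
    obtain rfl : b = a := Sum.inr_injective hba
    rcases ha with ha | ha
    · exact hcut.disjLR.le_bot ⟨ha, hb⟩
    · exact hcut.disjSR.le_bot ⟨ha, hb⟩
  · have hmem : ∀ v : V, v ∈ L ∨ v ∈ S ∨ v ∈ R := by
      intro v
      have : v ∈ L ∪ S ∪ R := hcut.cover.symm ▸ Set.mem_univ v
      simp only [Set.mem_union] at this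
      tauto
    ext (x | x) <;> simp only [Set.mem_union, Set.mem_image, Set.mem_univ, iff_true] <;>
      rcases hmem x with h | h | h <;> aesop
  · rintro x hx y hy hadj
    obtain ⟨a, ha, rfl⟩ := hx
    obtain ⟨b, hb, rfl⟩ := hy
    rcases hadj with rfl | hab
    · exact hcut.disjLR.le_bot ⟨ha, hb⟩
    · exact hcut.sep _ ha _ hb hab
  · rw [wt'_eq_s9, wt_union _ (disjoint_inl_inr _ _), ← wt'_eq_s9, ← wt'_eq_s9, wt'_inl, wt'_inr,
      wt_union w (Set.disjoint_left.2 fun a ha hb => hcut.disjSR.le_bot ⟨ha, hb⟩),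
      wt_union w (Set.disjoint_left.2 fun a ha hb => hcut.disjLS.le_bot ⟨ha, hb⟩)]
    have := wt_partition w hcut.disjLS hcut.disjLR hcut.disjSR hcut.cover
    omega

lemma undir_to_dir {V : Type*} [Fintype V] {E : Set (V × V)} (w : V → ℕ)
    {L' S' R' : Set (V ⊕ V)} {s t : V} (hcut : IsUndirCut E L' S' R')
    (hs : vOut s ∈ L') (ht : vIn t ∈ R') :
    ∃ L S R : Set V, IsDirCut E L S R ∧ s ∈ L ∧ t ∈ R ∧
      wt' w S' = wt w S + wt w Set.univ := by
  have hRout : ∀ v : V, Sum.inl v ∉ R' := by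
    intro v hv
    by_cases h : v = s
    · subst h; exact hcut.disjLR.le_bot ⟨hs, hv⟩
    · exact hcut.sep _ hs _ hv (fun he => h he.symm)
  have hLin : ∀ v : V, Sum.inr v ∉ L' := by
    intro v hv
    by_cases h : v = t
    · subst h; exact hcut.disjLR.le_bot ⟨hv, ht⟩
    · exact hcut.sep _ hv _ ht h
  have hLsub : L' ⊆ Set.range Sum.inl := by
    rintro (x | x) hx
    · exact ⟨x, rfl⟩
    · exact absurd hx (hLin x)
  have hRsub : R' ⊆ Set.range Sum.inr := by
    rintro (x | x) hx
    · exact absurd hx (hRout x)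
    · exact ⟨x, rfl⟩
  set A : Set V := Sum.inl ⁻¹' L' with hA
  set B : Set V := Sum.inr ⁻¹' R' with hB
  have hL' : Sum.inl '' A = L' := Set.image_preimage_eq_iff.2 hLsub
  have hR' : Sum.inr '' B = R' := Set.image_preimage_eq_iff.2 hRsub
  have hAB : Disjoint A B := by
    rw [Set.disjoint_left]
    intro v hvA hvB
    exact hcut.sep _ hvA _ hvB (Or.inl rfl)
  refine ⟨A, (A ∪ B)ᶜ, B, ⟨?_, hAB, ?_, ?_, ⟨s, hs⟩, ⟨t, ht⟩, ?_⟩, hs, ht, ?_⟩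
  · rw [Set.disjoint_left]; intro v hv hv'; exact hv' (Or.inl hv)
  · rw [Set.disjoint_right]; intro v hv hv'; exact hv' (Or.inr hv)
  · ext v; simp only [Set.mem_union, Set.mem_compl_iff, Set.mem_univ, iff_true]; tauto
  · intro u hu v hv huv
    exact hcut.sep _ hu _ hv (Or.inr huv)
  · have h1 := wt_partition (Sum.elim w w) hcut.disjLS hcut.disjLR hcut.disjSR hcut.cover
    rw [← wt'_eq_s9, ← wt'_eq_s9, ← wt'_eq_s9, ← wt'_eq_s9, ← hL', ← hR', wt'_inl, wt'_inr,
      wt'_univ] at h1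
    have h2 : wt w A + wt w (A ∪ B)ᶜ + wt w B = wt w Set.univ := by
      refine wt_partition w ?_ hAB ?_ ?_
      · rw [Set.disjoint_left]; intro v hv hv'; exact hv' (Or.inl hv)
      · rw [Set.disjoint_right]; intro v hv hv'; exact hv' (Or.inr hv)
      · ext v; simp only [Set.mem_union, Set.mem_compl_iff, Set.mem_univ, iff_true]; tauto
    omega

/-- Lemma `lemma:pair-min-cut-G'-G`: for `s ≠ t` with
`(s, t) ∉ E`, `κ_G(s, t) = κ_{G'}(s_out, t_in) - w(V)`. -/
theorem pair_min_cut_reduction {V : Type*} [Fintype V] (E : Set (V × V))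
    (hE : ∀ v : V, (v, v) ∉ E) (w : V → ℕ) (hw : ∀ v : V, 1 ≤ w v)
    (s t : V) (hst : s ≠ t) (hstE : (s, t) ∉ E) :
    sInf {k : ℕ | ∃ L S R : Set V, IsDirCut E L S R ∧ s ∈ L ∧ t ∈ R ∧ k = wt w S} =
      sInf {k : ℕ | ∃ L' S' R' : Set (V ⊕ V), IsUndirCut E L' S' R' ∧
          vOut s ∈ L' ∧ vIn t ∈ R' ∧ k = wt' w S'} - wt w Set.univ := by
  set W := wt w Set.univ with hW
  set D := {k : ℕ | ∃ L S R : Set V, IsDirCut E L S R ∧ s ∈ L ∧ t ∈ R ∧ k = wt w S} with hD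
  set U := {k : ℕ | ∃ L' S' R' : Set (V ⊕ V), IsUndirCut E L' S' R' ∧
      vOut s ∈ L' ∧ vIn t ∈ R' ∧ k = wt' w S'} with hU
  have hDU : ∀ k ∈ D, k + W ∈ U := by
    rintro k ⟨L, S, R, hcut, hs, ht, rfl⟩
    obtain ⟨L', S', R', hcut', hs', ht', hw'⟩ := dir_to_undir w hcut hs ht
    exact ⟨L', S', R', hcut', hs', ht', hw'.symm⟩
  have hUD : ∀ k' ∈ U, ∃ k ∈ D, k' = k + W := by
    rintro k' ⟨L', S', R', hcut', hs', ht', rfl⟩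
    obtain ⟨L, S, R, hcut, hs, ht, hw'⟩ := undir_to_dir w hcut' hs' ht'
    exact ⟨wt w S, ⟨L, S, R, hcut, hs, ht, rfl⟩, hw'⟩
  have hDne : D.Nonempty := by
    refine ⟨wt w (Set.univ \ {s, t}), {s}, Set.univ \ {s, t}, {t}, ⟨?_, ?_, ?_, ?_,
      ⟨s, rfl⟩, ⟨t, rfl⟩, ?_⟩, rfl, rfl, rfl⟩
    · rw [Set.disjoint_left]; rintro x rfl hx; exact hx.2 (Or.inl rfl)
    · rw [Set.disjoint_left]; rintro x rfl hx; exact hst (Set.mem_singleton_iff.1 hx)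
    · rw [Set.disjoint_right]; rintro x rfl hx; exact hx.2 (Or.inr rfl)
    · ext v
      simp only [Set.mem_union, Set.mem_singleton_iff, Set.mem_diff, Set.mem_univ,
        Set.mem_insert_iff, iff_true, true_and]
      tauto
    · rintro u rfl v rfl
      exact hstE
  obtain ⟨kd, hkd⟩ := hDne
  have hdU : sInf D + W ∈ U := hDU _ (Nat.sInf_mem ⟨kd, hkd⟩)
  have h1 : sInf U ≤ sInf D + W := Nat.sInf_le hdU
  obtain ⟨k, hkD, hk⟩ := hUD _ (Nat.sInf_mem ⟨_, hdU⟩)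
  have h2 : sInf D ≤ k := Nat.sInf_le hkD
  omega
end
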